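/- arXiv:1803.08895 — 5 statements merged into one kernel-verified Lean document; each statement's English description precedes it below -/
import Mathlib

section
/- Every alternating bilinear map f: Λ²ℂⁿ → ℂⁿ is a Lie algebra 2-coboundary for the abelian Lie algebra ℂⁿ with coefficients in the adjoint module e_n^ℂ = o(n,ℂ) ⋉ ℂⁿ; that is, there exists a linear map l: ℂⁿ → o(n,ℂ) ⊂ e_n^ℂ such that f(v, w) = [l(v), w] + [v, l(w)] for all v, w ∈ ℂⁿ. -/
/-!
The skew matrices are given by the Koszul formula, which also produces the Levi-Civita connection
from the torsion. With `T x y z = f x y ⬝ᵥ z`, let `l v` be the matrix of the bilinear form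
`(z, u) ↦ ½ (T u v z + T v z u - T z u v)`. Since `T` is skew in its first two arguments, this form
is skew in `(z, u)`, and the six terms of `z ⬝ᵥ (l w *ᵥ v - l v *ᵥ w)` collapse to `T v w z`.
-/

open Matrix

namespace LinearMap

variable {R ι : Type*} [CommRing R] [Invertible (2 : R)] [Fintype ι]

section KoszulForm

variable (f : (ι → R) →ₗ[R] (ι → R) →ₗ[R] ι → R)

def koszulForm : (ι → R) →ₗ[R] (ι → R) →ₗ[R] (ι → R) →ₗ[R] R where
  toFun v := mk₂ R (fun z u => ⅟2 * (f u v ⬝ᵥ z + f v z ⬝ᵥ u - f z u ⬝ᵥ v))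
    (by intros; simp only [map_add, add_apply, add_dotProduct, dotProduct_add]; ring)
    (by
      intros; simp only [map_smul, smul_apply, smul_dotProduct, dotProduct_smul, smul_eq_mul]; ring)
    (by intros; simp only [map_add, add_apply, add_dotProduct, dotProduct_add]; ring)
    (by
      intros; simp only [map_smul, smul_apply, smul_dotProduct, dotProduct_smul, smul_eq_mul]; ring)
  map_add' _ _ := ext₂ fun _ _ => by
    simp only [map_add, add_apply, add_dotProduct, dotProduct_add, mk₂_apply]; ring
  map_smul' _ _ := ext₂ fun _ _ => by
    simp only [map_smul, smul_apply, smul_dotProduct, dotProduct_smul, smul_eq_mul, mk₂_apply,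
      RingHom.id_apply]; ring

theorem koszulForm_apply (v z u : ι → R) :
    koszulForm f v z u = ⅟2 * (f u v ⬝ᵥ z + f v z ⬝ᵥ u - f z u ⬝ᵥ v) :=
  rfl

variable {f}

theorem IsAlt.koszulForm_swap (hf : f.IsAlt) (v z u : ι → R) :
    koszulForm f v u z = -koszulForm f v z u := by
  simp only [koszulForm_apply, ← hf.neg z u, ← hf.neg v u, ← hf.neg v z, neg_dotProduct]
  ring

theorem IsAlt.koszulForm_sub (hf : f.IsAlt) (v w z : ι → R) :
    koszulForm f w z v - koszulForm f v z w = f v w ⬝ᵥ z := by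
  simp only [koszulForm_apply, ← hf.neg v w, ← hf.neg z w, ← hf.neg z v, neg_dotProduct]
  linear_combination (f v w ⬝ᵥ z) * invOf_mul_self (2 : R)

end KoszulForm

section KoszulMatrix

variable [DecidableEq ι] (f : (ι → R) →ₗ[R] (ι → R) →ₗ[R] ι → R)

def koszulMatrix : (ι → R) →ₗ[R] Matrix ι ι R :=
  (toMatrix₂' R).toLinearMap ∘ₗ koszulForm f

theorem koszulMatrix_apply (v : ι → R) (i j : ι) :
    koszulMatrix f v i j = koszulForm f v (Pi.single i 1) (Pi.single j 1) :=
  toMatrix₂'_apply _ i j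

theorem dotProduct_koszulMatrix_mulVec (v z u : ι → R) :
    z ⬝ᵥ koszulMatrix f v *ᵥ u = koszulForm f v z u := by
  rw [← Matrix.toLinearMap₂'_apply', koszulMatrix, comp_apply, LinearEquiv.coe_coe,
    Matrix.toLinearMap₂'_toMatrix']

variable {f}

theorem IsAlt.koszulMatrix_transpose (hf : f.IsAlt) (v : ι → R) :
    (koszulMatrix f v)ᵀ = -koszulMatrix f v := by
  ext i j
  rw [transpose_apply, Matrix.neg_apply, koszulMatrix_apply, koszulMatrix_apply,
    hf.koszulForm_swap]

theorem IsAlt.eq_koszulMatrix_mulVec_sub (hf : f.IsAlt) (v w : ι → R) :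
    f v w = koszulMatrix f w *ᵥ v - koszulMatrix f v *ᵥ w := by
  refine dotProduct_eq _ _ fun z => ?_
  rw [dotProduct_comm, dotProduct_comm _ z, dotProduct_sub, dotProduct_koszulMatrix_mulVec,
    dotProduct_koszulMatrix_mulVec, hf.koszulForm_sub, dotProduct_comm]

theorem IsAlt.exists_skew_coboundary (hf : f.IsAlt) :
    ∃ l : (ι → R) →ₗ[R] Matrix ι ι R,
      (∀ v, (l v)ᵀ = -(l v)) ∧ ∀ v w, f v w = (l w).mulVec v - (l v).mulVec w :=
  ⟨koszulMatrix f, hf.koszulMatrix_transpose, hf.eq_koszulMatrix_mulVec_sub⟩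

end KoszulMatrix

end LinearMap

-- For `M ∈ o(n, ℂ)` and `w ∈ ℂⁿ` the bracket in `e_n^ℂ` is `[M, w] = -M *ᵥ w`, so the coboundary
-- `[l v, w] + [v, l w]` is `l w *ᵥ v - l v *ᵥ w`.
theorem alternating_to_Cn_is_coboundary_general (n : ℕ)
    (f : (Fin n → ℂ) →ₗ[ℂ] (Fin n → ℂ) →ₗ[ℂ] (Fin n → ℂ))
    (hf : ∀ v, f v v = 0) :
    ∃ l : (Fin n → ℂ) →ₗ[ℂ] Matrix (Fin n) (Fin n) ℂ,
      (∀ v, (l v)ᵀ = -(l v)) ∧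
      ∀ v w, f v w = (l w).mulVec v - (l v).mulVec w :=
  LinearMap.IsAlt.exists_skew_coboundary hf

/-- Every alternating bilinear map `f : Λ²ℂⁿ → ℂⁿ` is a
2-coboundary: there is a linear map `l : ℂⁿ → o(n,ℂ)` with
`f(v, w) = [l(v), w] + [v, l(w)]` for all `v, w`. -/
theorem alternating_to_Cn_is_coboundary (n : ℕ) (hn : 3 ≤ n)
    (f : (Fin n → ℂ) →ₗ[ℂ] (Fin n → ℂ) →ₗ[ℂ] (Fin n → ℂ))
    (hf : ∀ v, f v v = 0) :
    ∃ l : (Fin n → ℂ) →ₗ[ℂ] Matrix (Fin n) (Fin n) ℂ,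
      (∀ v, (l v)ᵀ = -(l v)) ∧
      ∀ v w, f v w = (l w).mulVec v - (l v).mulVec w :=
  alternating_to_Cn_is_coboundary_general n f hf
end

section
/- The coboundary map l ↦ dl, from the space of linear maps Hom(ℂⁿ, o(n,ℂ)) to the space of alternating bilinear maps Λ²ℂⁿ → ℂⁿ, given by dl(v,w) = [l(v), w] + [v, l(w)], is injective (for n ≥ 3). -/
open Matrix

/-!
STATEMENT 4: The coboundary map `l ↦ dl`, from linear maps
`ℂⁿ → o(n,ℂ)` to alternating bilinear maps `Λ²ℂⁿ → ℂⁿ`, given by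
`dl(v,w) = [l(v), w] + [v, l(w)] = l(v)·w − l(w)·v`, is injective (`n ≥ 3`).

Here `o(n,ℂ)` consists of antisymmetric `n × n` complex matrices, acting on
`ℂⁿ` by matrix multiplication, so `[l(v), w]` means `(l v).mulVec w`.
-/

/-- If `l : ℂⁿ → o(n,ℂ)` is linear with antisymmetric values
and `dl(v,w) = l(v)·w − l(w)·v` vanishes identically, then `l = 0`. -/
theorem coboundary_injective (n : ℕ) (hn : 3 ≤ n)
    (l : (Fin n → ℂ) →ₗ[ℂ] Matrix (Fin n) (Fin n) ℂ)
    (hskew : ∀ v, (l v)ᵀ = -(l v))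
    (hdl : ∀ v w, (l v).mulVec w - (l w).mulVec v = 0) :
    l = 0 := by
  set e : Fin n → Fin n → ℂ := fun k => Pi.single k 1 with he
  set A : Fin n → Fin n → Fin n → ℂ := fun k i j => l (e k) i j with hA
  -- skew symmetry in (i, j)
  have hs : ∀ k i j, A k j i = -A k i j := by
    intro k i j
    have := congrFun (congrFun (hskew (e k)) i) j
    simpa [Matrix.transpose_apply] using this
  -- symmetry swapping first and last slots
  have hsym : ∀ k i j, A k i j = A j i k := by
    intro k i j
    have h := congrFun (hdl (e k) (e j)) i
    have h1 : (l (e k)).mulVec (e j) i = A k i j := by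
      simp [he, hA, Matrix.mulVec_single]
    have h2 : (l (e j)).mulVec (e k) i = A j i k := by
      simp [he, hA, Matrix.mulVec_single]
    have : (l (e k)).mulVec (e j) i - (l (e j)).mulVec (e k) i = 0 := by
      simpa using h
    rw [h1, h2] at this
    linear_combination this
  -- conclude A = 0
  have hzero : ∀ k i j, A k i j = 0 := by
    intro k i j
    have h2 : (2 : ℂ) * A k i j = 0 := by
      linear_combination hs k i j - hsym k j i - hs i k j + hsym i k j + hs j i k + hsym k i j
    exact (mul_eq_zero.mp h2).resolve_left two_ne_zero
  -- now l vanishes on basis vectors, hence everywhere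
  apply Module.Basis.ext (Pi.basisFun ℂ (Fin n))
  intro k
  ext i j
  simpa [hA, he, Pi.basisFun_apply] using hzero k i j
end

section
/- The deformed brackets on g_n^ℂ(ε₁, ε₂, ε₃) satisfy the Jacobi identity: the bracket defined on basis {l_{ij}}_{i<j} ∪ {e_1,...,e_{2n}} ∪ {I} by the standard o(n,ℂ) relations among l_{ij}, the standard action [l_{ij}, e_k] = δ_{ik}e_j − δ_{jk}e_i and [l_{ij}, e_{n+k}] = δ_{ik}e_{n+j} − δ_{jk}e_{n+i}, [l_{ij}, I] = 0, together with [e_i, e_j] = ε₁ l_{ij}, [e_{n+i}, e_{n+j}] = ε₂ l_{ij}, [e_i, e_{n+j}] = δ_{ij} I + ε₃ l_{ij}, [e_i, I] = ε₃ e_i − ε₁ e_{n+i}, [e_{n+i}, I] = ε₂ e_i − ε₃ e_{n+i}, defines a Lie algebra for every (ε₁, ε₂, ε₃) ∈ ℂ³. -/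
open Matrix

/-- The underlying space of `g_n^ℂ(ε₁,ε₂,ε₃)`, in coordinates: `(A, v, w, s)`
where `A` is the (antisymmetric) coefficient matrix of `Σ_{i<j} A i j • l_{ij}`,
`v` the coefficient vector of `Σ v i • e_i`, `w` that of `Σ w i • e_{n+i}`,
and `s` the coefficient of `I`. -/
abbrev GAmb (n : ℕ) := Matrix (Fin n) (Fin n) ℂ × (Fin n → ℂ) × (Fin n → ℂ) × ℂ

/-- The deformed bracket of `g_n^ℂ(ε₁,ε₂,ε₃)`, in coordinates.  It encodes the
structure constants: standard `o(n,ℂ)` relations among the `l_{ij}`;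
`[l_{ij},e_k] = δ_{ik}e_j − δ_{jk}e_i`, `[l_{ij},e_{n+k}] = δ_{ik}e_{n+j} − δ_{jk}e_{n+i}`,
`[l_{ij},I] = 0`; `[e_i,e_j] = ε₁ l_{ij}`, `[e_{n+i},e_{n+j}] = ε₂ l_{ij}`,
`[e_i,e_{n+j}] = δ_{ij} I + ε₃ l_{ij}`, `[e_i,I] = ε₃ e_i − ε₁ e_{n+i}`,
`[e_{n+i},I] = ε₂ e_i − ε₃ e_{n+i}`. -/
noncomputable def gBr (n : ℕ) (e1 e2 e3 : ℂ) (X Y : GAmb n) : GAmb n :=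
  ( Y.1 * X.1 - X.1 * Y.1
      + e1 • (Matrix.vecMulVec X.2.1 Y.2.1 - Matrix.vecMulVec Y.2.1 X.2.1)
      + e2 • (Matrix.vecMulVec X.2.2.1 Y.2.2.1 - Matrix.vecMulVec Y.2.2.1 X.2.2.1)
      + e3 • (Matrix.vecMulVec X.2.1 Y.2.2.1 - Matrix.vecMulVec Y.2.2.1 X.2.1)
      + e3 • (Matrix.vecMulVec X.2.2.1 Y.2.1 - Matrix.vecMulVec Y.2.1 X.2.2.1),
    - X.1.mulVec Y.2.1 + Y.1.mulVec X.2.1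
      + e3 • (Y.2.2.2 • X.2.1 - X.2.2.2 • Y.2.1)
      + e2 • (Y.2.2.2 • X.2.2.1 - X.2.2.2 • Y.2.2.1),
    - X.1.mulVec Y.2.2.1 + Y.1.mulVec X.2.2.1
      - e1 • (Y.2.2.2 • X.2.1 - X.2.2.2 • Y.2.1)
      - e3 • (Y.2.2.2 • X.2.2.1 - X.2.2.2 • Y.2.2.1),
    (∑ i, X.2.1 i * Y.2.2.1 i) - (∑ i, Y.2.1 i * X.2.2.1 i) )

/-- The block-matrix realization of `g_n^ℂ(ε₁,ε₂,ε₃)` inside `gl(n+2,ℂ)`: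
`(A,x,u,s)` goes to the matrix preserving the (possibly degenerate) symmetric
bilinear form `diag(1,…,1,g₂)` with `g₂ = !![ε₁,ε₃;ε₃,ε₂]`. -/
noncomputable def gRho (n : ℕ) (e1 e2 e3 : ℂ) (X : GAmb n) :
    Matrix (Fin n ⊕ Fin 2) (Fin n ⊕ Fin 2) ℂ :=
  Matrix.fromBlocks X.1
    (Matrix.of fun i j => ![-(e1 * X.2.1 i + e3 * X.2.2.1 i), -(e3 * X.2.1 i + e2 * X.2.2.1 i)] j)
    (Matrix.of fun i j => ![X.2.1 j, X.2.2.1 j] i)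
    (X.2.2.2 • !![e3, e2; -e1, -e3])

lemma gKey {n : ℕ} (M : Matrix (Fin n) (Fin n) ℂ) (hM : Mᵀ = -M) (y : Fin n → ℂ) (j : Fin n) :
    ∑ k, y k * M k j = -∑ k, M j k * y k := by
  rw [← Finset.sum_neg_distrib]
  refine Finset.sum_congr rfl fun k _ => ?_
  have : M k j = -M j k := by rw [← Matrix.transpose_apply M j k, hM]; rfl
  rw [this]; ring

lemma gKey2 {n : ℕ} (M : Matrix (Fin n) (Fin n) ℂ) (hM : Mᵀ = -M) (y w : Fin n → ℂ) :
    ∑ i, (∑ k, M i k * y k) * w i = -∑ i, (∑ k, M i k * w k) * y i := by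
  have hM' : ∀ p q, M p q = -M q p := fun p q => by
    rw [← Matrix.transpose_apply M q p, hM]; rfl
  have h1 : ∑ i, (∑ k, M i k * y k) * w i = ∑ i, ∑ k, M i k * (y k * w i) :=
    Finset.sum_congr rfl fun i _ => by
      rw [Finset.sum_mul]; exact Finset.sum_congr rfl fun k _ => by ring
  rw [h1, Finset.sum_comm, ← Finset.sum_neg_distrib]
  refine Finset.sum_congr rfl fun i _ => ?_
  rw [Finset.sum_mul, ← Finset.sum_neg_distrib]
  refine Finset.sum_congr rfl fun k _ => ?_
  rw [hM' k i]; ring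

set_option maxHeartbeats 1000000 in
lemma gRho_hom (n : ℕ) (e1 e2 e3 : ℂ) (X Y : GAmb n) (hX : X.1ᵀ = -X.1) (hY : Y.1ᵀ = -Y.1) :
    gRho n e1 e2 e3 (gBr n e1 e2 e3 X Y)
      = gRho n e1 e2 e3 Y * gRho n e1 e2 e3 X - gRho n e1 e2 e3 X * gRho n e1 e2 e3 Y := by
  rw [gRho, gRho, gRho, Matrix.fromBlocks_multiply, Matrix.fromBlocks_multiply, sub_eq_add_neg,
    Matrix.fromBlocks_neg, Matrix.fromBlocks_add]
  refine Matrix.fromBlocks_inj.mpr ⟨?_, ?_, ?_, ?_⟩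
  · ext i j
    simp [gBr, Matrix.mul_apply, Matrix.vecMulVec_apply, Fin.sum_univ_two, mul_add, mul_sub,
      add_mul, sub_mul, neg_mul, mul_neg, Finset.sum_add_distrib, Finset.sum_sub_distrib,
      Finset.sum_neg_distrib, Finset.mul_sum]
    ring
  · ext i j
    fin_cases j <;>
    · simp [gBr, Matrix.mul_apply, Matrix.mulVec, dotProduct, Fin.sum_univ_two,
        mul_add, mul_sub, add_mul, sub_mul, neg_mul, mul_neg, Finset.sum_add_distrib,
        Finset.sum_sub_distrib, Finset.sum_neg_distrib, Finset.mul_sum]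
      simp only [Finset.mul_sum, mul_comm, mul_left_comm, mul_assoc]
      ring
  · ext i j
    fin_cases i <;>
    · simp [gBr, Matrix.mul_apply, Matrix.mulVec, dotProduct, Fin.sum_univ_two,
        Matrix.vecHead, Matrix.vecTail,
        mul_add, mul_sub, add_mul, sub_mul, neg_mul, mul_neg, Finset.sum_add_distrib,
        Finset.sum_sub_distrib, Finset.sum_neg_distrib, Finset.mul_sum]
      rw [gKey X.1 hX, gKey Y.1 hY]
      simp only [Finset.mul_sum, mul_comm, mul_left_comm, mul_assoc]
      ring
  · ext i j
    fin_cases i <;> fin_cases j <;>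
    · simp [gBr, Matrix.mul_apply, dotProduct, Fin.sum_univ_two,
        Matrix.vecHead, Matrix.vecTail,
        mul_add, mul_sub, add_mul, sub_mul, neg_mul, mul_neg, Finset.sum_add_distrib,
        Finset.sum_sub_distrib, Finset.sum_neg_distrib, Finset.mul_sum]
      simp only [Finset.mul_sum, mul_comm, mul_left_comm, mul_assoc]
      ring

lemma gBr_skew (n : ℕ) (e1 e2 e3 : ℂ) (X Y : GAmb n)
    (hX : X.1ᵀ = -X.1) (hY : Y.1ᵀ = -Y.1) :
    (gBr n e1 e2 e3 X Y).1ᵀ = -(gBr n e1 e2 e3 X Y).1 := by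
  have hv : ∀ (a b : Fin n → ℂ), (Matrix.vecMulVec a b)ᵀ = Matrix.vecMulVec b a := by
    intro a b; ext i j; simp [Matrix.vecMulVec_apply, mul_comm]
  simp only [gBr]
  simp only [Matrix.transpose_add, Matrix.transpose_sub, Matrix.transpose_smul,
    Matrix.transpose_mul, hX, hY, hv]
  simp only [Matrix.neg_mul, Matrix.mul_neg, neg_neg]
  ext i j
  simp [Matrix.mul_apply, Matrix.vecMulVec_apply]
  ring

lemma gRho_add (n : ℕ) (e1 e2 e3 : ℂ) (X Y : GAmb n) :
    gRho n e1 e2 e3 (X + Y) = gRho n e1 e2 e3 X + gRho n e1 e2 e3 Y := by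
  ext i j
  rcases i with i | i <;> rcases j with j | j
  · simp [gRho]
  · simp only [gRho, Prod.fst_add, Prod.snd_add, Pi.add_apply, Matrix.fromBlocks_apply₁₂,
      Matrix.add_apply, Matrix.of_apply]
    fin_cases j <;> simp <;> ring
  · simp only [gRho, Prod.fst_add, Prod.snd_add, Pi.add_apply, Matrix.fromBlocks_apply₂₁,
      Matrix.add_apply, Matrix.of_apply]
    fin_cases i <;> simp
  · simp only [gRho, Prod.fst_add, Prod.snd_add, Matrix.fromBlocks_apply₂₂,
      Matrix.add_apply, Matrix.smul_apply, smul_eq_mul]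
    ring

lemma gBr_scalar_jacobi (n : ℕ) (e1 e2 e3 : ℂ) (X Y Z : GAmb n)
    (hX : X.1ᵀ = -X.1) (hY : Y.1ᵀ = -Y.1) (hZ : Z.1ᵀ = -Z.1) :
    (gBr n e1 e2 e3 (gBr n e1 e2 e3 X Y) Z).2.2.2
      + (gBr n e1 e2 e3 (gBr n e1 e2 e3 Y Z) X).2.2.2
      + (gBr n e1 e2 e3 (gBr n e1 e2 e3 Z X) Y).2.2.2 = 0 := by
  simp only [gBr, Pi.add_apply, Pi.sub_apply, Pi.neg_apply, Pi.smul_apply, smul_eq_mul,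
    Matrix.mulVec, dotProduct, add_mul, sub_mul, neg_mul, mul_add, mul_sub, mul_neg,
    Finset.sum_add_distrib, Finset.sum_sub_distrib, Finset.sum_neg_distrib]
  have swap_sum : ∀ (b : Fin n → ℂ) (f : Fin n → Fin n → ℂ),
      ∑ x, b x * ∑ k, f x k = ∑ x, (∑ k, f x k) * b x :=
    fun b f => Finset.sum_congr rfl fun _ _ => mul_comm _ _
  simp only [swap_sum]
  rw [gKey2 X.1 hX Y.2.1 Z.2.2.1, gKey2 X.1 hX Y.2.2.1 Z.2.1,
      gKey2 Y.1 hY X.2.1 Z.2.2.1, gKey2 Y.1 hY X.2.2.1 Z.2.1,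
      gKey2 Z.1 hZ Y.2.1 X.2.2.1, gKey2 Z.1 hZ Y.2.2.1 X.2.1]
  simp only [mul_comm, mul_left_comm, mul_assoc]
  ring

set_option maxHeartbeats 1000000 in
/-- For every `(ε₁, ε₂, ε₃) ∈ ℂ³` the deformed bracket on
`g_n^ℂ(ε₁,ε₂,ε₃)` satisfies the Jacobi identity (on elements of the algebra,
i.e. with antisymmetric matrix parts), so it defines a Lie algebra. -/
theorem gBr_jacobi (n : ℕ) (hn : 3 ≤ n) (e1 e2 e3 : ℂ)
    (X Y Z : GAmb n)
    (hX : X.1ᵀ = -X.1) (hY : Y.1ᵀ = -Y.1) (hZ : Z.1ᵀ = -Z.1) :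
    gBr n e1 e2 e3 (gBr n e1 e2 e3 X Y) Z
      + gBr n e1 e2 e3 (gBr n e1 e2 e3 Y Z) X
      + gBr n e1 e2 e3 (gBr n e1 e2 e3 Z X) Y = 0 := by
  set P1 := gBr n e1 e2 e3 (gBr n e1 e2 e3 X Y) Z with hP1
  set P2 := gBr n e1 e2 e3 (gBr n e1 e2 e3 Y Z) X with hP2
  set P3 := gBr n e1 e2 e3 (gBr n e1 e2 e3 Z X) Y with hP3
  have h1 : gRho n e1 e2 e3 (P1 + P2 + P3) = 0 := by
    rw [gRho_add, gRho_add, hP1, hP2, hP3,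
      gRho_hom n e1 e2 e3 _ Z (gBr_skew n e1 e2 e3 X Y hX hY) hZ,
      gRho_hom n e1 e2 e3 _ X (gBr_skew n e1 e2 e3 Y Z hY hZ) hX,
      gRho_hom n e1 e2 e3 _ Y (gBr_skew n e1 e2 e3 Z X hZ hX) hY,
      gRho_hom n e1 e2 e3 X Y hX hY,
      gRho_hom n e1 e2 e3 Y Z hY hZ,
      gRho_hom n e1 e2 e3 Z X hZ hX]
    noncomm_ring
  set L := P1 + P2 + P3 with hL
  have hm : L.1 = 0 := by
    ext i j
    have := congrFun (congrFun h1 (Sum.inl i)) (Sum.inl j)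
    simpa [gRho] using this
  have hv1 : L.2.1 = 0 := by
    funext j
    have := congrFun (congrFun h1 (Sum.inr 0)) (Sum.inl j)
    simpa [gRho] using this
  have hv2 : L.2.2.1 = 0 := by
    funext j
    have := congrFun (congrFun h1 (Sum.inr 1)) (Sum.inl j)
    simpa [gRho] using this
  have hs : L.2.2.2 = 0 := by
    show P1.2.2.2 + P2.2.2.2 + P3.2.2.2 = 0
    exact gBr_scalar_jacobi n e1 e2 e3 X Y Z hX hY hZ
  exact Prod.ext hm (Prod.ext hv1 (Prod.ext hv2 hs))
end

section
/- Suppose ε₁ ≠ 0 and ε₃² = ε₁ε₂. Then the linear map acting as the identity on the basis elements e_i (1 ≤ i ≤ n), I, and l_{ij}, and sending e_{n+i} ↦ e_{n+i} + √(ε₂/ε₁) e_i, is a Lie algebra isomorphism from g_n^ℂ(ε₁, 0, 0) to g_n^ℂ(ε₁, ε₂, ε₃), for an appropriate choice of square root with ε₃ = √(ε₁)·√(ε₂) conventions. -/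
open Matrix

/-! The map is the shear `v ↦ v + c • w` of the `e`-coordinates, inverted by the shear with `-c`.
Substituting `v + c • w` into the undeformed bracket produces `ε₂`- and `ε₃`-terms with coefficients
`c² ε₁` and `-c ε₁`, which is exactly the deformation once `c² = ε₂ / ε₁` and `ε₃ = -c ε₁`. -/

def gShear (n : ℕ) (c : ℂ) (X : GAmb n) : GAmb n :=
  (X.1, X.2.1 + c • X.2.2.1, X.2.2.1, X.2.2.2)

theorem gShear_gShear (n : ℕ) (a b : ℂ) (X : GAmb n) :
    gShear n a (gShear n b X) = gShear n (a + b) X := by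
  simp only [gShear, add_smul]
  abel_nf

theorem gShear_zero (n : ℕ) (X : GAmb n) : gShear n 0 X = X := by
  simp [gShear]

theorem gShear_bijOn (n : ℕ) (c : ℂ) (p : Matrix (Fin n) (Fin n) ℂ → Prop) :
    Set.BijOn (gShear n c) {X | p X.1} {X | p X.1} :=
  Set.InvOn.bijOn (f' := gShear n (-c))
    ⟨fun X _ => by rw [gShear_gShear, neg_add_cancel, gShear_zero],
      fun X _ => by rw [gShear_gShear, add_neg_cancel, gShear_zero]⟩
    (fun _ hX => hX) (fun _ hX => hX)

theorem gShear_gBr (n : ℕ) (e1 c : ℂ) (X Y : GAmb n) :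
    gShear n c (gBr n e1 0 0 X Y) =
      gBr n e1 (c ^ 2 * e1) (-(c * e1)) (gShear n c X) (gShear n c Y) := by
  obtain ⟨A, v, w, s⟩ := X
  obtain ⟨B, v', w', s'⟩ := Y
  simp only [gShear, gBr, Prod.mk.injEq]
  refine ⟨?_, ?_, ?_, ?_⟩
  · simp only [add_vecMulVec, vecMulVec_add, smul_vecMulVec, vecMulVec_smul]
    module
  · simp only [mulVec_add, mulVec_smul]
    module
  · module
  · change v ⬝ᵥ w' - v' ⬝ᵥ w = (v + c • w) ⬝ᵥ w' - (v' + c • w') ⬝ᵥ w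
    rw [add_dotProduct, add_dotProduct, smul_dotProduct, smul_dotProduct, dotProduct_comm w' w]
    ring

theorem g_conic_iso_general (n : ℕ) (e1 e2 e3 c : ℂ)
    (h1 : e1 ≠ 0) (hc : c ^ 2 = e2 / e1) (hc3 : e3 = -(c * e1)) :
    let ψ : GAmb n → GAmb n := fun X =>
      (X.1, X.2.1 + c • X.2.2.1, X.2.2.1, X.2.2.2)
    Set.BijOn ψ {X : GAmb n | X.1ᵀ = -X.1} {X : GAmb n | X.1ᵀ = -X.1} ∧
      ∀ X Y : GAmb n, X.1ᵀ = -X.1 → Y.1ᵀ = -Y.1 →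
        ψ (gBr n e1 0 0 X Y) = gBr n e1 e2 e3 (ψ X) (ψ Y) := by
  have he2 : e2 = c ^ 2 * e1 := by rw [hc, div_mul_cancel₀ _ h1]
  subst he2 hc3
  exact ⟨gShear_bijOn n c (fun A => Aᵀ = -A), fun X Y _ _ => gShear_gBr n e1 c X Y⟩

/-- Suppose `ε₁ ≠ 0` and `ε₃² = ε₁ε₂`.  With the appropriate
square root `c` of `ε₂/ε₁` (conventions `ε₃ = √ε₁·√ε₂`, i.e. `ε₃ = −c·ε₁` for
this choice of `c`), the linear map acting as the identity on the `e_i`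
(`1 ≤ i ≤ n`), on `I` and on the `l_{ij}`, and sending
`e_{n+i} ↦ e_{n+i} + √(ε₂/ε₁) e_i`, is a Lie algebra isomorphism
`g_n^ℂ(ε₁,0,0) → g_n^ℂ(ε₁,ε₂,ε₃)`. -/
theorem g_conic_iso (n : ℕ) (hn : 3 ≤ n) (e1 e2 e3 c : ℂ)
    (h1 : e1 ≠ 0) (hconic : e3 ^ 2 = e1 * e2)
    (hc : c ^ 2 = e2 / e1) (hc3 : e3 = -(c * e1)) :
    let ψ : GAmb n → GAmb n := fun X =>
      (X.1, X.2.1 + c • X.2.2.1, X.2.2.1, X.2.2.2)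
    Set.BijOn ψ {X : GAmb n | X.1ᵀ = -X.1} {X : GAmb n | X.1ᵀ = -X.1} ∧
      ∀ X Y : GAmb n, X.1ᵀ = -X.1 → Y.1ᵀ = -Y.1 →
        ψ (gBr n e1 0 0 X Y) = gBr n e1 e2 e3 (ψ X) (ψ Y) :=
  g_conic_iso_general n e1 e2 e3 c h1 hc hc3
end

section
/- Suppose ε₁ = 0, ε₂ ∈ ℂ, and ε₃ ≠ 0. Then the linear map acting as the identity on e_i (1 ≤ i ≤ n), I, and l_{ij}, and sending e_{n+i} ↦ e_{n+i} − (ε₂/(2ε₃)) e_i, is a Lie algebra isomorphism from g_n^ℂ(0, 0, ε₃) to g_n^ℂ(0, ε₂, ε₃). -/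
open Matrix

lemma gaux_vmv_left {n : ℕ} (v w u : Fin n → ℂ) (c : ℂ) :
    Matrix.vecMulVec (v - c • w) u = Matrix.vecMulVec v u - c • Matrix.vecMulVec w u := by
  ext i j
  simp [Matrix.vecMulVec_apply]
  ring

lemma gaux_vmv_right {n : ℕ} (v w u : Fin n → ℂ) (c : ℂ) :
    Matrix.vecMulVec u (v - c • w) = Matrix.vecMulVec u v - c • Matrix.vecMulVec u w := by
  ext i j
  simp [Matrix.vecMulVec_apply]
  ring

lemma gaux_sum_comm {n : ℕ} (f g : Fin n → ℂ) :
    ∑ x, f x * g x = ∑ x, g x * f x :=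
  Finset.sum_congr rfl fun x _ => mul_comm _ _

/-- Suppose `ε₁ = 0` and `ε₃ ≠ 0`.  The linear map acting as
the identity on the `e_i` (`1 ≤ i ≤ n`), on `I` and on the `l_{ij}`, and
sending `e_{n+i} ↦ e_{n+i} − (ε₂/(2ε₃)) e_i`, is a Lie algebra isomorphism
`g_n^ℂ(0,0,ε₃) → g_n^ℂ(0,ε₂,ε₃)`. -/
theorem g_line_iso (n : ℕ) (hn : 3 ≤ n) (e2 e3 : ℂ) (h3 : e3 ≠ 0) :
    let ψ : GAmb n → GAmb n := fun X =>
      (X.1, X.2.1 - (e2 / (2 * e3)) • X.2.2.1, X.2.2.1, X.2.2.2)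
    Set.BijOn ψ {X : GAmb n | X.1ᵀ = -X.1} {X : GAmb n | X.1ᵀ = -X.1} ∧
      ∀ X Y : GAmb n, X.1ᵀ = -X.1 → Y.1ᵀ = -Y.1 →
        ψ (gBr n 0 0 e3 X Y) = gBr n 0 e2 e3 (ψ X) (ψ Y) := by
  intro ψ
  have hc : e2 = 2 * e3 * (e2 / (2 * e3)) := by field_simp
  constructor
  · have hinv : Set.InvOn
        (fun X : GAmb n => (X.1, X.2.1 + (e2 / (2 * e3)) • X.2.2.1, X.2.2.1, X.2.2.2)) ψ
        {X : GAmb n | X.1ᵀ = -X.1} {X : GAmb n | X.1ᵀ = -X.1} := by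
      constructor
      · rintro ⟨A, v, w, s⟩ -
        simp only [ψ, Prod.mk.injEq]
        exact ⟨trivial, by abel, trivial⟩
      · rintro ⟨A, v, w, s⟩ -
        simp only [ψ, Prod.mk.injEq]
        exact ⟨trivial, by abel, trivial⟩
    exact hinv.bijOn (fun X hX => hX) (fun X hX => hX)
  · intro X Y hX hY
    obtain ⟨XA, Xv, Xw, Xs⟩ := X
    obtain ⟨YA, Yv, Yw, Ys⟩ := Y
    simp only [ψ, gBr, Prod.mk.injEq]
    set c := e2 / (2 * e3) with hcdef
    refine ⟨?_, ?_, ?_, ?_⟩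
    · rw [hc]
      simp only [gaux_vmv_left, gaux_vmv_right, zero_smul, add_zero, smul_sub, smul_smul]
      module
    · rw [hc]
      simp only [Matrix.mulVec_sub, Matrix.mulVec_smul, smul_sub, smul_smul, zero_smul,
        add_zero, smul_add]
      module
    · simp
    · simp only [Pi.sub_apply, Pi.smul_apply, smul_eq_mul, sub_mul, Finset.sum_sub_distrib,
        mul_assoc, ← Finset.mul_sum]
      rw [gaux_sum_comm Yw Xw]
      ring
end
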